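/- For a ring R the following are equivalent: (1) every right R-module can be embedded in a product of iso-simple right R-modules; (2) every nonzero right R-module has zero Jacobson radical (the intersection of all maximal submodules is zero); (3) R is a right V-ring. -/

import Mathlib

universe u

open MulOpposite

/-- A nonzero module is iso-simple if it is isomorphic to each of its nonzero submodules. -/
def IsIsoSimpleModule (A : Type u) [Ring A] (M : Type u) [AddCommGroup M] [Module A M] : Prop :=
  Nontrivial M ∧ ∀ N : Submodule A M, N ≠ ⊥ → Nonempty (M ≃ₗ[A] N)

/-- `R` is a right V-ring: every simple right `R`-module is injective.
Right `R`-modules are modules over `Rᵐᵒᵖ`. -/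
def IsRightVRing (R : Type u) [Ring R] : Prop :=
  ∀ (S : Type u) [AddCommGroup S] [Module Rᵐᵒᵖ S],
    IsSimpleModule Rᵐᵒᵖ S → Module.Injective Rᵐᵒᵖ S


/-!
Given `x ≠ 0` in `M`, Zorn's lemma gives a submodule `N` maximal among those avoiding `x`; then
`x + N` lies in every nonzero submodule of `M ⧸ N` and spans a simple submodule. Under (1), a
coordinate of an embedding of `M ⧸ N` into a product of iso-simple modules is injective, so `M ⧸ N`
is iso-simple and hence isomorphic to that simple submodule; under (3) the simple submodule is
injective, so a retraction onto it is injective as well. Either way `M ⧸ N` is simple, i.e. `N` is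
maximal, so `x` is not in the radical. Conversely, if radicals vanish then `M` embeds into the
product of its simple quotients, and for simple `S` and a nonzero `g : I → S` on a right ideal, a
maximal submodule of `R ⧸ ker g` avoiding some `i₀ + ker g` with `g i₀ ≠ 0` yields a map `R → S`
extending `g`, by Schur's lemma; Baer's criterion concludes.
-/

universe v

open Submodule

theorem LinearMap.exists_comp_eq_of_ker_le {R M N P : Type*} [Ring R] [AddCommGroup M]
    [Module R M] [AddCommGroup N] [Module R N] [AddCommGroup P] [Module R P] {f : M →ₗ[R] N}
    (hf : Function.Surjective f) {g : M →ₗ[R] P} (h : ker f ≤ ker g) :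
    ∃ φ : N →ₗ[R] P, φ ∘ₗ f = g :=
  ⟨(ker f).liftQ g h ∘ₗ (f.quotKerEquivOfSurjective hf).symm, by ext; simp⟩

namespace Submodule

variable {A M : Type*} [Ring A] [AddCommGroup M] [Module A M]

theorem exists_maximal_notMem {x : M} (hx : x ≠ 0) : ∃ N : Submodule A M, Maximal (x ∉ ·) N := by
  refine (zorn_le_nonempty₀ {N : Submodule A M | x ∉ N} (fun c hcs hc N hN => ?_) ⊥
    (by simpa using hx)).imp fun _ h => h.2
  refine ⟨sSup c, fun hx => ?_, fun _ => le_sSup⟩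
  obtain ⟨N', hN'c, hxN'⟩ := (mem_sSup_of_directed ⟨N, hN⟩ hc.directedOn).1 hx
  exact hcs hN'c hxN'

theorem mkQ_mem_of_maximal_notMem {x : M} {N : Submodule A M} (hN : Maximal (x ∉ ·) N)
    {Q : Submodule A (M ⧸ N)} (hQ : Q ≠ ⊥) : N.mkQ x ∈ Q := by
  by_contra hxQ
  have hcomap : Q.comap N.mkQ = N := hN.eq_of_ge hxQ (le_comap_mkQ N Q)
  exact hQ (comap_injective_of_surjective N.mkQ_surjective (by rw [hcomap, comap_bot, ker_mkQ]))

end Submodule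

section ForallMem

variable {A P P' : Type*} [Ring A] [AddCommGroup P] [Module A P] [AddCommGroup P'] [Module A P']
  {y : P} (hy : ∀ Q : Submodule A P, Q ≠ ⊥ → y ∈ Q)
include hy

theorem injective_of_apply_ne_zero_of_forall_mem {f : P →ₗ[A] P'} (hf : f y ≠ 0) :
    Function.Injective f := by
  rw [← LinearMap.ker_eq_bot]
  by_contra hker
  exact hf (hy _ hker)

theorem isSimpleModule_span_of_forall_mem (hy0 : y ≠ 0) : IsSimpleModule A (span A {y}) := by
  rw [isSimpleModule_iff_isAtom]
  refine ⟨by simpa using hy0, fun Q hQ => ?_⟩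
  by_contra hQ0
  exact hQ.not_ge (span_le.2 (by simpa using hy Q hQ0))

theorem isSimpleModule_of_injective_span (hy0 : y ≠ 0) [Module.Injective A (span A {y})] :
    IsSimpleModule A P := by
  obtain ⟨π, hπ⟩ := Module.Injective.out (span A {y}).subtype (span A {y}).injective_subtype
    LinearMap.id
  have hinj : Function.Injective π := by
    refine injective_of_apply_ne_zero_of_forall_mem hy ?_
    have hπy : π y = ⟨y, mem_span_singleton_self y⟩ := hπ ⟨y, mem_span_singleton_self y⟩
    simpa [hπy] using hy0
  have := isSimpleModule_span_of_forall_mem hy hy0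
  exact IsSimpleModule.congr (LinearEquiv.ofBijective π ⟨hinj, fun z => ⟨z, hπ z⟩⟩)

end ForallMem

namespace IsIsoSimpleModule

variable {A M M' : Type u} [Ring A] [AddCommGroup M] [Module A M] [AddCommGroup M'] [Module A M']

theorem of_isSimpleModule [IsSimpleModule A M] : IsIsoSimpleModule A M :=
  ⟨IsSimpleModule.nontrivial A M, fun N hN => by
    obtain rfl := (eq_bot_or_eq_top N).resolve_left hN
    exact ⟨topEquiv.symm⟩⟩

theorem of_injective (h : IsIsoSimpleModule A M') [Nontrivial M] {f : M →ₗ[A] M'}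
    (hf : Function.Injective f) : IsIsoSimpleModule A M := by
  have iso (N : Submodule A M) (hN : N ≠ ⊥) : Nonempty (M' ≃ₗ[A] N) := by
    obtain ⟨e⟩ := h.2 (N.map f) (by simpa using (map_injective_of_injective hf).ne hN)
    exact ⟨e.trans (N.equivMapOfInjective f hf).symm⟩
  refine ⟨‹_›, fun N hN => ?_⟩
  obtain ⟨eTop⟩ := iso ⊤ top_ne_bot
  obtain ⟨eN⟩ := iso N hN
  exact ⟨(topEquiv.symm.trans eTop.symm).trans eN⟩

theorem isSimpleModule (h : IsIsoSimpleModule A M) (S : Submodule A M) [hS : IsSimpleModule A S] :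
    IsSimpleModule A M := by
  obtain ⟨e⟩ := h.2 S (isSimpleModule_iff_isAtom.1 hS).1
  exact IsSimpleModule.congr e

end IsIsoSimpleModule

theorem isSimpleModule_of_injective_pi {A P : Type u} [Ring A] [AddCommGroup P] [Module A P]
    {y : P} (hy : ∀ Q : Submodule A P, Q ≠ ⊥ → y ∈ Q) (hy0 : y ≠ 0) {ι : Type*}
    {Q : ι → Type u} [∀ i, AddCommGroup (Q i)] [∀ i, Module A (Q i)]
    (hQ : ∀ i, IsIsoSimpleModule A (Q i)) {f : P →ₗ[A] (Π i, Q i)} (hf : Function.Injective f) :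
    IsSimpleModule A P := by
  obtain ⟨i, hi⟩ : ∃ i, f y i ≠ 0 := Function.ne_iff.1 ((map_ne_zero_iff f hf).2 hy0)
  have : Nontrivial P := ⟨⟨y, 0, hy0⟩⟩
  have hiso := (hQ i).of_injective
    (injective_of_apply_ne_zero_of_forall_mem hy (f := LinearMap.proj i ∘ₗ f) hi)
  have := isSimpleModule_span_of_forall_mem hy hy0
  exact hiso.isSimpleModule (span A {y})

namespace Module

variable {A : Type u} [Ring A]

theorem jacobson_eq_bot_of_forall_isSimpleModule {M : Type v} [AddCommGroup M] [Module A M]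
    (h : ∀ (P : Type v) [AddCommGroup P] [Module A P] (y : P), y ≠ 0 →
      (∀ Q : Submodule A P, Q ≠ ⊥ → y ∈ Q) → IsSimpleModule A P) :
    jacobson A M = ⊥ := by
  refine eq_bot_iff.2 fun x hx => (mem_bot A).2 (by_contra fun hx0 => ?_)
  obtain ⟨N, hN⟩ := exists_maximal_notMem (A := A) hx0
  have := h (M ⧸ N) (N.mkQ x) (by simpa using hN.prop) fun Q hQ => mkQ_mem_of_maximal_notMem hN hQ
  exact hN.prop (mem_sInf.1 hx N (isSimpleModule_iff_isCoatom.1 this))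

theorem ker_pi_mkQ_isCoatom (M : Type*) [AddCommGroup M] [Module A M] :
    LinearMap.ker (LinearMap.pi fun N : {N : Submodule A M // IsCoatom N} => N.1.mkQ) =
      jacobson A M := by
  simp only [LinearMap.ker_pi, ker_mkQ]
  exact (sInf_eq_iInf' _).symm

theorem exists_isCoatom_notMem_of_jacobson_eq_bot {M : Type*} [AddCommGroup M] [Module A M]
    (h : jacobson A M = ⊥) {x : M} (hx : x ≠ 0) : ∃ N : Submodule A M, IsCoatom N ∧ x ∉ N := by
  by_contra! hcoatom
  exact hx ((mem_bot A).1 (h ▸ (mem_sInf.2 hcoatom : x ∈ jacobson A M)))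

theorem baer_of_forall_jacobson_eq_bot
    (h : ∀ (M : Type u) [AddCommGroup M] [Module A M], jacobson A M = ⊥)
    {S : Type*} [AddCommGroup S] [Module A S] [IsSimpleModule A S] : Baer A S := by
  intro I g
  by_cases hg : g = 0
  · exact ⟨0, by simp [hg]⟩
  obtain ⟨i₀, hi₀⟩ : ∃ i, g i ≠ 0 := not_forall.1 fun hzero => hg (LinearMap.ext hzero)
  set K : Ideal A := (LinearMap.ker g).map I.subtype
  have hi₀K : K.mkQ i₀ ≠ 0 := by
    rw [ne_eq, mkQ_apply, Quotient.mk_eq_zero]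
    rintro ⟨j, hj, hji⟩
    exact hi₀ (Subtype.ext hji ▸ hj)
  obtain ⟨Q, hQ, hi₀Q⟩ := exists_isCoatom_notMem_of_jacobson_eq_bot (h _) hi₀K
  have := isSimpleModule_iff_isCoatom.2 hQ
  set q : A →ₗ[A] (A ⧸ K) ⧸ Q := Q.mkQ ∘ₗ K.mkQ
  have hker : LinearMap.ker g ≤ LinearMap.ker (q ∘ₗ I.subtype) := fun i hi => by
    have hiK : K.mkQ (i : A) = 0 := (Quotient.mk_eq_zero K).2 (mem_map_of_mem hi)
    rw [LinearMap.mem_ker, LinearMap.comp_apply, subtype_apply, LinearMap.comp_apply, hiK, map_zero]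
  obtain ⟨φ, hφ⟩ := LinearMap.exists_comp_eq_of_ker_le (LinearMap.surjective_of_ne_zero hg) hker
  have hφ0 : φ ≠ 0 := by
    rintro rfl
    exact hi₀Q (by simpa [q] using (LinearMap.congr_fun hφ i₀).symm)
  set e := LinearEquiv.ofBijective φ (LinearMap.bijective_of_ne_zero hφ0)
  refine ⟨e.symm.toLinearMap ∘ₗ q, fun x hx => ?_⟩
  have hqx : q x = e (g ⟨x, hx⟩) := (LinearMap.congr_fun hφ ⟨x, hx⟩).symm
  rw [LinearMap.comp_apply, LinearEquiv.coe_coe, hqx, e.symm_apply_apply]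

end Module
/-- For a ring `R` the following are equivalent:
(1) every right `R`-module embeds in a product of iso-simple right `R`-modules;
(2) every nonzero right `R`-module has zero Jacobson radical (the intersection of its
    maximal submodules is zero);
(3) `R` is a right V-ring. -/
theorem rightV_tfae (R : Type u) [Ring R] :
    List.TFAE
      [∀ (M : Type u) [AddCommGroup M] [Module Rᵐᵒᵖ M],
         ∃ (ι : Type u) (P : ι → ModuleCat.{u} Rᵐᵒᵖ),
           (∀ i, IsIsoSimpleModule Rᵐᵒᵖ (P i)) ∧
           ∃ f : M →ₗ[Rᵐᵒᵖ] ((i : ι) → P i), Function.Injective f,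
       ∀ (M : Type u) [AddCommGroup M] [Module Rᵐᵒᵖ M], Nontrivial M →
         sInf {N : Submodule Rᵐᵒᵖ M | IsCoatom N} = ⊥,
       IsRightVRing R] := by
  have rad_iff : (∀ (M : Type u) [AddCommGroup M] [Module Rᵐᵒᵖ M], Nontrivial M →
      sInf {N : Submodule Rᵐᵒᵖ M | IsCoatom N} = ⊥) ↔
      ∀ (M : Type u) [AddCommGroup M] [Module Rᵐᵒᵖ M], Module.jacobson Rᵐᵒᵖ M = ⊥ :=
    ⟨fun h M _ _ => (subsingleton_or_nontrivial M).elim (fun _ => Subsingleton.elim _ _) (h M),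
      fun h M _ _ _ => h M⟩
  tfae_have 1 → 2 := fun h1 => rad_iff.2 fun _ _ _ =>
    Module.jacobson_eq_bot_of_forall_isSimpleModule fun P _ _ _ hy0 hy => by
      obtain ⟨_, _, hQ, _, hf⟩ := h1 P
      exact isSimpleModule_of_injective_pi hy hy0 hQ hf
  tfae_have 3 → 2 := fun h3 => rad_iff.2 fun _ _ _ =>
    Module.jacobson_eq_bot_of_forall_isSimpleModule fun _ _ _ _ hy0 hy =>
      have := h3 _ (isSimpleModule_span_of_forall_mem hy hy0)
      isSimpleModule_of_injective_span hy hy0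
  tfae_have 2 → 1 := fun h2 M _ _ =>
    ⟨{N : Submodule Rᵐᵒᵖ M // IsCoatom N}, fun N => ModuleCat.of Rᵐᵒᵖ (M ⧸ N.1),
      fun N => have := isSimpleModule_iff_isCoatom.2 N.2; .of_isSimpleModule, _,
      LinearMap.ker_eq_bot.1 ((Module.ker_pi_mkQ_isCoatom M).trans (rad_iff.1 h2 M))⟩
  tfae_have 2 → 3 := fun h2 _ _ _ _ =>
    (Module.baer_of_forall_jacobson_eq_bot (rad_iff.1 h2)).injective
  tfae_finish
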